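/- Let T = (T_k)_{k∈X} be a g-frame for H with canonical dual g-frame T̃ = (T_k S_T^{-1})_{k∈X}. Then the g-Gram matrix G_T has closed range in ℓ²(X;H), G_{T̃} is the Moore–Penrose pseudo-inverse of G_T (i.e., ker(G_{T̃}) = ran(G_T)^⊥, ran(G_{T̃}) = ker(G_T)^⊥, and G_T G_{T̃} G_T = G_T), and the mixed g-Gram matrix satisfies G_{T,T̃} = G_T G_{T̃}. -/

import Mathlib

/-!
Write `S = C† C` for the frame operator, so that the canonical dual has analysis operator
`C S⁻¹`. As the inverse of a self-adjoint operator, `S⁻¹` is self-adjoint, and the identities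
`S S⁻¹ = S⁻¹ S = 1` make `S⁻¹ C†` a continuous left inverse of `C` and `C S⁻¹` a right inverse
of `C†`. Hence `ran C` is closed, and both Gram matrices `C C†` and `(C S⁻¹)(C S⁻¹)†` have range
`ran C` and kernel `ker C† = (ran C)ᗮ`, which are the Moore–Penrose range and kernel conditions.
The remaining identities are algebra in `C`, `C†` and `S⁻¹`.
-/

noncomputable section

open scoped ENNReal

namespace OVFrame

abbrev L2 (X : Type*) (H : Type*) [NormedAddCommGroup H] [InnerProductSpace ℂ H] :
    Type _ :=
  lp (fun _ : X => H) 2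

variable {X : Type*} [Countable X]
variable {H : Type*} [NormedAddCommGroup H] [InnerProductSpace ℂ H] [CompleteSpace H]

def IsGFrame (T : X → H →L[ℂ] H) (A B : ℝ) : Prop :=
  0 < A ∧ A ≤ B ∧
    ∀ f : H, Summable (fun k => ‖T k f‖ ^ 2) ∧
      A * ‖f‖ ^ 2 ≤ ∑' k, ‖T k f‖ ^ 2 ∧ ∑' k, ‖T k f‖ ^ 2 ≤ B * ‖f‖ ^ 2

open ContinuousLinearMap

theorem _root_.IsSelfAdjoint.of_mul_eq_one {M : Type*} [Monoid M] [StarMul M] {s r : M}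
    (hs : IsSelfAdjoint s) (h : s * r = 1) : IsSelfAdjoint r :=
  left_inv_eq_right_inv (by rw [← hs.star_eq, ← star_mul, h, star_one]) h

section PseudoInverse

variable {𝕜 E F : Type*} [RCLike 𝕜] [NormedAddCommGroup E] [InnerProductSpace 𝕜 E]
  [CompleteSpace E] [NormedAddCommGroup F] [InnerProductSpace 𝕜 F] [CompleteSpace F]
  {C : E →L[𝕜] F} {Sinv : E →L[𝕜] E}

theorem range_comp_adjoint_of_surjective {T : E →L[𝕜] F} (h : Function.Surjective (adjoint T)) :
    (T ∘L adjoint T).range = T.range :=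
  LinearMap.range_comp_of_range_eq_top _ (LinearMap.range_eq_top.mpr h)

theorem adjoint_apply_apply_inv (hS1 : (adjoint C ∘L C) ∘L Sinv = 1) (x : E) :
    adjoint C (C (Sinv x)) = x :=
  DFunLike.congr_fun hS1 x

theorem inv_apply_adjoint_apply (hS2 : Sinv ∘L (adjoint C ∘L C) = 1) (x : E) :
    Sinv (adjoint C (C x)) = x :=
  DFunLike.congr_fun hS2 x

theorem isSelfAdjoint_inv (hS1 : (adjoint C ∘L C) ∘L Sinv = 1) : IsSelfAdjoint Sinv :=
  (isPositive_adjoint_comp_self C).isSelfAdjoint.of_mul_eq_one hS1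

theorem surjective_adjoint_of_inv (hS1 : (adjoint C ∘L C) ∘L Sinv = 1) :
    Function.Surjective (adjoint C) :=
  fun x => ⟨C (Sinv x), adjoint_apply_apply_inv hS1 x⟩

theorem isClosed_range_of_inv (hS2 : Sinv ∘L (adjoint C ∘L C) = 1) :
    IsClosed (C.range : Set F) := by
  rw [LinearMap.coe_range]
  exact Function.LeftInverse.isClosed_range (f := Sinv ∘L adjoint C)
    (inv_apply_adjoint_apply hS2) (by fun_prop) C.continuous

theorem range_comp_adjoint_of_inv (hS1 : (adjoint C ∘L C) ∘L Sinv = 1) :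
    (C ∘L adjoint C).range = C.range :=
  range_comp_adjoint_of_surjective (surjective_adjoint_of_inv hS1)

theorem isClosed_range_comp_adjoint (hS1 : (adjoint C ∘L C) ∘L Sinv = 1)
    (hS2 : Sinv ∘L (adjoint C ∘L C) = 1) : IsClosed (Set.range (C ∘L adjoint C)) := by
  rw [← coe_coe, ← LinearMap.coe_range, range_comp_adjoint_of_inv hS1]
  exact isClosed_range_of_inv hS2

theorem ker_dualGram (hS1 : (adjoint C ∘L C) ∘L Sinv = 1) :
    ((C ∘L Sinv) ∘L adjoint (C ∘L Sinv)).ker = (C ∘L adjoint C).rangeᗮ := by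
  have hinj : (Sinv : E →ₗ[𝕜] E).ker = ⊥ :=
    LinearMap.ker_eq_bot.mpr <|
      Function.LeftInverse.injective (g := fun x => adjoint C (C x)) (adjoint_apply_apply_inv hS1)
  rw [ker_self_comp_adjoint, adjoint_comp, (isSelfAdjoint_inv hS1).adjoint_eq, toLinearMap_comp,
    LinearMap.ker_comp_of_ker_eq_bot _ hinj, range_comp_adjoint_of_inv hS1, orthogonal_range]

theorem range_dualGram (hS1 : (adjoint C ∘L C) ∘L Sinv = 1)
    (hS2 : Sinv ∘L (adjoint C ∘L C) = 1) :
    ((C ∘L Sinv) ∘L adjoint (C ∘L Sinv)).range = (C ∘L adjoint C).kerᗮ := by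
  have hSinv := (isSelfAdjoint_inv hS1).adjoint_eq
  have hsurj : (Sinv : E →ₗ[𝕜] E).range = ⊤ :=
    LinearMap.range_eq_top.mpr fun x => ⟨adjoint C (C x), inv_apply_adjoint_apply hS2 x⟩
  have hadjoint_surj : Function.Surjective (adjoint (C ∘L Sinv)) := by
    rw [adjoint_comp, hSinv, coe_comp]
    exact (LinearMap.range_eq_top.mp hsurj).comp (surjective_adjoint_of_inv hS1)
  rw [range_comp_adjoint_of_surjective hadjoint_surj, toLinearMap_comp,
    LinearMap.range_comp_of_range_eq_top _ hsurj, ker_self_comp_adjoint, ← orthogonal_range,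
    Submodule.orthogonal_orthogonal_eq_closure,
    (isClosed_range_of_inv hS2).submodule_topologicalClosure_eq]

theorem gram_comp_dualGram (hS1 : (adjoint C ∘L C) ∘L Sinv = 1) :
    (C ∘L adjoint C) ∘L ((C ∘L Sinv) ∘L adjoint (C ∘L Sinv)) = C ∘L adjoint (C ∘L Sinv) := by
  ext x
  simp [adjoint_comp, adjoint_apply_apply_inv hS1]

theorem gram_comp_dualGram_comp_gram (hS1 : (adjoint C ∘L C) ∘L Sinv = 1)
    (hS2 : Sinv ∘L (adjoint C ∘L C) = 1) :
    (C ∘L adjoint C) ∘L ((C ∘L Sinv) ∘L adjoint (C ∘L Sinv)) ∘L (C ∘L adjoint C) =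
      C ∘L adjoint C := by
  ext x
  simp [adjoint_comp, (isSelfAdjoint_inv hS1).adjoint_eq, adjoint_apply_apply_inv hS1,
    inv_apply_adjoint_apply hS2]

end PseudoInverse

/-- `C` is the analysis operator of `T`, so that `D_T = C†`, `S_T = C† C` and `G_T = C C†`;
`Sinv = S_T⁻¹`, and `Ct` is the analysis operator of the canonical dual `T̃`. -/
theorem gram_canonicalDual_eq_pseudoInverse
    (T : X → H →L[ℂ] H)
    (C : H →L[ℂ] L2 X H) (hC : ∀ (f : H) (k : X), (C f) k = T k f)
    (Sinv : H →L[ℂ] H)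
    (hS1 : ((adjoint C) ∘L C) ∘L Sinv = 1)
    (hS2 : Sinv ∘L ((adjoint C) ∘L C) = 1)
    (Ct : H →L[ℂ] L2 X H) (hCt : ∀ (f : H) (k : X), (Ct f) k = T k (Sinv f)) :
    IsClosed (Set.range (C ∘L (adjoint C))) ∧
    LinearMap.ker ((Ct ∘L (adjoint Ct) : L2 X H →L[ℂ] L2 X H) : L2 X H →ₗ[ℂ] L2 X H) = (LinearMap.range ((C ∘L (adjoint C) : L2 X H →L[ℂ] L2 X H) : L2 X H →ₗ[ℂ] L2 X H))ᗮ ∧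
    LinearMap.range ((Ct ∘L (adjoint Ct) : L2 X H →L[ℂ] L2 X H) : L2 X H →ₗ[ℂ] L2 X H) = (LinearMap.ker ((C ∘L (adjoint C) : L2 X H →L[ℂ] L2 X H) : L2 X H →ₗ[ℂ] L2 X H))ᗮ ∧
    (C ∘L (adjoint C)) ∘L (Ct ∘L (adjoint Ct)) ∘L (C ∘L (adjoint C)) =
      C ∘L (adjoint C) ∧
    C ∘L (adjoint Ct) = (C ∘L (adjoint C)) ∘L (Ct ∘L (adjoint Ct)) := by
  obtain rfl : Ct = C ∘L Sinv := by
    ext f k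
    rw [comp_apply, hCt, hC]
  exact ⟨isClosed_range_comp_adjoint hS1 hS2, ker_dualGram hS1, range_dualGram hS1 hS2,
    gram_comp_dualGram_comp_gram hS1 hS2, (gram_comp_dualGram hS1).symm⟩

end OVFrame
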